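/- Let K_n be the complete graph on n ≥ 2 vertices and 0 < p < ∞. Then ‖M_{K_n}‖_{p,∞} = n^{1/p - 1} if 0 < p ≤ 1, and ‖M_{K_n}‖_{p,∞} = 1 if p ≥ 1. Consequently, for every finite simple connected graph G with n vertices, ‖M_G‖_{p,∞} ≥ n^{1/p-1} if 0 < p ≤ 1, and ‖M_G‖_{p,∞} ≥ 1 if p ≥ 1. -/

import Mathlib

/-
On `Kₙ` every ball of positive radius is the whole vertex set, so `M f = max |f| (‖f‖₁ / n)`.
At a level `t` below the average `‖f‖₁ / n` the level set of `M f` has at most `n` points, which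
costs `‖f‖₁ n^(1/p - 1)`; at a level above it the level set of `M f` is that of `f`, and Chebyshev's
inequality costs `‖f‖_p`. Comparing `‖f‖₁` with `‖f‖_p` (subadditivity of `x ↦ x^p` for `p ≤ 1`,
Hölder for `p ≥ 1`) gives the upper bounds. Conversely, on any connected graph the Dirac mass `δ_x`
has `M δ_x ≥ 1/n` everywhere (the ball of radius `n - 1` is everything) and `M δ_x x = 1`, which
gives the two lower bounds; on `Kₙ` they match the upper bounds.
-/

open scoped Classical
open Finset

noncomputable section

variable {V : Type*} [Fintype V]

/-- metric ball of radius `r` centered at `v` in the graph `G` -/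
def gBall (G : SimpleGraph V) (v : V) (r : ℕ) : Finset V :=
  Finset.univ.filter fun w => G.dist v w ≤ r

/-- Hardy–Littlewood maximal operator on the graph `G` -/
def maxOp (G : SimpleGraph V) (f : V → ℝ) (v : V) : ℝ :=
  ⨆ k : Fin (Fintype.card V), (∑ w ∈ gBall G v k.1, |f w|) / ((gBall G v k.1).card : ℝ)

/-- ℓ^p (quasi)norm of a function on the vertices -/
def pNorm (p : ℝ) (f : V → ℝ) : ℝ := (∑ v, |f v| ^ p) ^ (1 / p)

/-- operator (quasi)norm of the maximal operator of `G` on ℓ^p -/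
def opNorm (G : SimpleGraph V) (p : ℝ) : ℝ :=
  ⨆ f : {f : V → ℝ // f ≠ 0}, pNorm p (maxOp G f.1) / pNorm p f.1

/-- weak ℓ^p norm -/
def wNorm (p : ℝ) (f : V → ℝ) : ℝ :=
  ⨆ t : {t : ℝ // 0 < t},
    t.1 * ((Finset.univ.filter fun v => t.1 < |f v|).card : ℝ) ^ (1 / p)

/-- weak-type operator norm of the maximal operator of `G` -/
def wOpNorm (G : SimpleGraph V) (p : ℝ) : ℝ :=
  ⨆ f : {f : V → ℝ // f ≠ 0}, wNorm p (maxOp G f.1) / pNorm p f.1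

/-- maximal operator over all graphs on `V` isomorphic to `G` -/
def maxOpIso (G : SimpleGraph V) (f : V → ℝ) (j : V) : ℝ :=
  ⨆ H : {H : SimpleGraph V // Nonempty (H ≃g G)}, maxOp H.1 f j

/-- operator norm of `maxOpIso` on ℓ^p -/
def opNormIso (G : SimpleGraph V) (p : ℝ) : ℝ :=
  ⨆ f : {f : V → ℝ // f ≠ 0}, pNorm p (maxOpIso G f.1) / pNorm p f.1

/-- Kronecker delta at `k` -/
def kdelta (k : V) : V → ℝ := fun j => if j = k then 1 else 0

/-- star graph on `Fin n` with center `0` -/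
def starGraph (n : ℕ) : SimpleGraph (Fin n) :=
  SimpleGraph.fromRel fun i _ => i.1 = 0

/-- diameter of a graph -/
def gDiam (G : SimpleGraph V) : ℕ :=
  Finset.univ.sup fun p : V × V => G.dist p.1 p.2

/-- dilation index of a graph -/
def dilIndex (G : SimpleGraph V) : ℝ :=
  ⨆ x : V, ⨆ r : {r : ℕ // r ≤ gDiam G},
    ((gBall G x (3 * r.1)).card : ℝ) / ((gBall G x r.1).card : ℝ)

/-- overlapping index of a graph -/
def overlapIndex (G : SimpleGraph V) : ℕ :=
  sInf { r : ℕ | ∀ J : Finset (V × ℕ), ∃ I ⊆ J,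
    J.biUnion (fun j => gBall G j.1 j.2) = I.biUnion (fun i => gBall G i.1 i.2) ∧
    ∀ v : V, (I.filter fun i => v ∈ gBall G i.1 i.2).card ≤ r }

section Balls

variable {G : SimpleGraph V}

lemma gBall_zero (hG : G.Connected) (v : V) : gBall G v 0 = {v} := by
  ext w
  simp [gBall, hG.dist_eq_zero_iff, eq_comm]

lemma gBall_card_sub_one (hG : G.Connected) (v : V) :
    gBall G v (Fintype.card V - 1) = univ := by
  ext w
  simp only [gBall, mem_filter, mem_univ, true_and, iff_true]
  obtain ⟨q⟩ := hG.preconnected v w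
  have := SimpleGraph.dist_le q.toPath.1
  have := q.toPath.2.length_lt
  omega

lemma gBall_top_of_pos (v : V) {r : ℕ} (hr : 0 < r) : gBall (⊤ : SimpleGraph V) v r = univ := by
  ext w
  simp only [gBall, mem_filter, mem_univ, true_and, iff_true]
  rcases eq_or_ne v w with rfl | h
  · simp
  · rw [SimpleGraph.dist_eq_one_iff_adj.2 (by simpa using h)]
    omega

end Balls

section MaximalOperator

variable {G : SimpleGraph V}

lemma le_maxOp (G : SimpleGraph V) (f : V → ℝ) (v : V) (k : Fin (Fintype.card V)) :
    (∑ w ∈ gBall G v k.1, |f w|) / ((gBall G v k.1).card : ℝ) ≤ maxOp G f v :=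
  le_ciSup (f := fun k : Fin (Fintype.card V) =>
    (∑ w ∈ gBall G v k.1, |f w|) / ((gBall G v k.1).card : ℝ)) (Set.finite_range _).bddAbove k

lemma maxOp_nonneg (G : SimpleGraph V) (f : V → ℝ) (v : V) : 0 ≤ maxOp G f v :=
  Real.iSup_nonneg fun _ => by positivity

lemma maxOp_le_of_abs_le (G : SimpleGraph V) {f : V → ℝ} {B : ℝ} (hB : 0 ≤ B)
    (hf : ∀ w, |f w| ≤ B) (v : V) : maxOp G f v ≤ B :=
  Real.iSup_le (fun k => div_le_of_le_mul₀ (Nat.cast_nonneg _) hB <| by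
    simpa [mul_comm] using sum_le_card_nsmul _ _ B fun w _ => hf w) hB

lemma abs_le_maxOp (hG : G.Connected) (f : V → ℝ) (v : V) : |f v| ≤ maxOp G f v := by
  have : Nonempty V := ⟨v⟩
  simpa [gBall_zero hG] using le_maxOp G f v ⟨0, Fintype.card_pos⟩

lemma sum_abs_div_card_le_maxOp (hG : G.Connected) (f : V → ℝ) (v : V) :
    (∑ w, |f w|) / (Fintype.card V : ℝ) ≤ maxOp G f v := by
  have : Nonempty V := ⟨v⟩
  simpa [gBall_card_sub_one hG] using
    le_maxOp G f v ⟨Fintype.card V - 1, Nat.sub_lt Fintype.card_pos one_pos⟩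

lemma maxOp_top_le (f : V → ℝ) (v : V) :
    maxOp (⊤ : SimpleGraph V) f v ≤ max |f v| ((∑ w, |f w|) / (Fintype.card V : ℝ)) := by
  have : Nonempty V := ⟨v⟩
  refine Real.iSup_le (fun k => ?_) ((abs_nonneg _).trans (le_max_left _ _))
  rcases Nat.eq_zero_or_pos k.1 with h | h
  · simp [h, gBall_zero SimpleGraph.connected_top]
  · simp [gBall_top_of_pos v h]

end MaximalOperator

section Norms

variable {p : ℝ}

lemma pNorm_nonneg (p : ℝ) (f : V → ℝ) : 0 ≤ pNorm p f := by
  unfold pNorm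
  positivity

lemma pNorm_pos {f : V → ℝ} (hf : f ≠ 0) : 0 < pNorm p f := by
  obtain ⟨v, hv⟩ := Function.ne_iff.1 hf
  refine Real.rpow_pos_of_pos ((Real.rpow_pos_of_pos (abs_pos.2 hv) p).trans_le ?_) _
  exact single_le_sum (fun w _ => Real.rpow_nonneg (abs_nonneg (f w)) p) (mem_univ v)

lemma abs_le_pNorm (hp : 0 < p) (f : V → ℝ) (v : V) : |f v| ≤ pNorm p f := by
  calc |f v| = (|f v| ^ p) ^ (1 / p) := by
        rw [one_div, Real.rpow_rpow_inv (abs_nonneg _) hp.ne']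
    _ ≤ pNorm p f := Real.rpow_le_rpow (by positivity)
        (single_le_sum (fun w _ => Real.rpow_nonneg (abs_nonneg (f w)) p) (mem_univ v))
        (by positivity)

lemma pNorm_le_of_abs_le (hp : 0 < p) {g : V → ℝ} {B : ℝ} (hB : 0 ≤ B) (hg : ∀ v, |g v| ≤ B) :
    pNorm p g ≤ (Fintype.card V : ℝ) ^ (1 / p) * B := by
  have hsum : ∑ v, |g v| ^ p ≤ Fintype.card V * B ^ p := by
    simpa using sum_le_card_nsmul univ _ (B ^ p) fun v _ =>
      Real.rpow_le_rpow (abs_nonneg _) (hg v) hp.le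
  calc pNorm p g ≤ (Fintype.card V * B ^ p) ^ (1 / p) :=
        Real.rpow_le_rpow (by positivity) hsum (by positivity)
    _ = (Fintype.card V : ℝ) ^ (1 / p) * B := by
        rw [Real.mul_rpow (by positivity) (by positivity), one_div,
          Real.rpow_rpow_inv hB hp.ne']

lemma pNorm_kdelta (hp : p ≠ 0) (k : V) : pNorm p (kdelta k) = 1 := by
  simp [pNorm, kdelta, apply_ite, Real.zero_rpow hp]

lemma sum_abs_kdelta (k : V) : ∑ v, |kdelta k v| = 1 := by
  simp [kdelta, apply_ite]

lemma mul_card_rpow_le_pNorm (hp : 0 < p) (f : V → ℝ) {t : ℝ} (ht : 0 ≤ t) (S : Finset V)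
    (hS : ∀ v ∈ S, t ≤ |f v|) : t * (S.card : ℝ) ^ (1 / p) ≤ pNorm p f := by
  have hsum : S.card * t ^ p ≤ ∑ v, |f v| ^ p :=
    calc S.card * t ^ p ≤ ∑ v ∈ S, |f v| ^ p := by
          simpa using card_nsmul_le_sum S _ (t ^ p) fun v hv =>
            Real.rpow_le_rpow ht (hS v hv) hp.le
      _ ≤ ∑ v, |f v| ^ p := sum_le_sum_of_subset_of_nonneg (subset_univ S)
          fun v _ _ => by positivity
  calc t * (S.card : ℝ) ^ (1 / p) = (S.card * t ^ p) ^ (1 / p) := by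
        rw [Real.mul_rpow (by positivity) (by positivity), one_div,
          Real.rpow_rpow_inv ht hp.ne', mul_comm]
    _ ≤ pNorm p f := Real.rpow_le_rpow (by positivity) hsum (by positivity)

lemma sum_abs_le_pNorm (hp : 0 < p) (hp1 : p ≤ 1) (f : V → ℝ) : ∑ v, |f v| ≤ pNorm p f := by
  have hsub : ∀ s : Finset V, (∑ v ∈ s, |f v|) ^ p ≤ ∑ v ∈ s, |f v| ^ p := by
    intro s
    induction s using Finset.cons_induction with
    | empty => simp [Real.zero_rpow hp.ne']
    | cons a s ha ih =>
      rw [sum_cons, sum_cons]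
      exact (Real.rpow_add_le_add_rpow (abs_nonneg _) (by positivity) hp.le hp1).trans
        (add_le_add le_rfl ih)
  calc ∑ v, |f v| = ((∑ v, |f v|) ^ p) ^ (1 / p) := by
        rw [one_div, Real.rpow_rpow_inv (by positivity) hp.ne']
    _ ≤ pNorm p f := Real.rpow_le_rpow (by positivity) (hsub univ) (by positivity)

lemma sum_abs_le_card_rpow_mul_pNorm (hp1 : 1 ≤ p) (f : V → ℝ) :
    ∑ v, |f v| ≤ (Fintype.card V : ℝ) ^ (1 - 1 / p) * pNorm p f := by
  have hp : 0 < p := one_pos.trans_le hp1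
  calc ∑ v, |f v| = ((∑ v, |f v|) ^ p) ^ (1 / p) := by
        rw [one_div, Real.rpow_rpow_inv (by positivity) hp.ne']
    _ ≤ ((Fintype.card V : ℝ) ^ (p - 1) * ∑ v, |f v| ^ p) ^ (1 / p) :=
        Real.rpow_le_rpow (by positivity)
          (by simpa using Real.rpow_sum_le_const_mul_sum_rpow (s := univ) f hp1) (by positivity)
    _ = (Fintype.card V : ℝ) ^ (1 - 1 / p) * pNorm p f := by
        rw [pNorm, Real.mul_rpow (by positivity) (by positivity), ← Real.rpow_mul (by positivity)]
        congr 2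
        field_simp

end Norms

section WeakNorm

variable {p : ℝ}

lemma mul_card_superlevel_rpow_le_pNorm (hp : 0 < p) (g : V → ℝ) {t : ℝ} (ht : 0 < t) :
    t * ((univ.filter fun v => t < |g v|).card : ℝ) ^ (1 / p) ≤ pNorm p g :=
  mul_card_rpow_le_pNorm hp g ht.le _ fun _ hv => (mem_filter.1 hv).2.le

lemma wNorm_le_pNorm (hp : 0 < p) (g : V → ℝ) : wNorm p g ≤ pNorm p g :=
  Real.iSup_le (fun t => mul_card_superlevel_rpow_le_pNorm hp g t.2) (pNorm_nonneg p g)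

lemma le_wNorm (hp : 0 < p) (g : V → ℝ) {t : ℝ} (ht : 0 < t) :
    t * ((univ.filter fun v => t < |g v|).card : ℝ) ^ (1 / p) ≤ wNorm p g :=
  le_ciSup (f := fun t : {t : ℝ // 0 < t} =>
      t.1 * ((univ.filter fun v => t.1 < |g v|).card : ℝ) ^ (1 / p))
    ⟨pNorm p g, by rintro _ ⟨s, rfl⟩; exact mul_card_superlevel_rpow_le_pNorm hp g s.2⟩ ⟨t, ht⟩

open Topology in
/-- The level sets in `wNorm` are strict, so the bound at level `c` is only reached as a limit. -/
lemma le_wNorm_of_le_card (hp : 0 < p) (g : V → ℝ) {c m : ℝ} (hc : 0 < c) (hm : 0 ≤ m)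
    (h : ∀ t, 0 < t → t < c → m ≤ ((univ.filter fun v => t < |g v|).card : ℝ)) :
    c * m ^ (1 / p) ≤ wNorm p g := by
  refine le_of_tendsto (x := 𝓝[<] c)
    (((continuous_mul_const (m ^ (1 / p))).tendsto c).mono_left nhdsWithin_le_nhds) ?_
  filter_upwards [Ioo_mem_nhdsLT hc] with t ht
  exact (mul_le_mul_of_nonneg_left (Real.rpow_le_rpow hm (h t ht.1 ht.2) (by positivity))
    ht.1.le).trans (le_wNorm hp g ht.1)

end WeakNorm

section OperatorNorm

variable {p : ℝ}

lemma bddAbove_wNorm_maxOp_div_pNorm (hp : 0 < p) (G : SimpleGraph V) :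
    BddAbove (Set.range fun f : {f : V → ℝ // f ≠ 0} => wNorm p (maxOp G f.1) / pNorm p f.1) := by
  refine ⟨(Fintype.card V : ℝ) ^ (1 / p), ?_⟩
  rintro _ ⟨f, rfl⟩
  rw [div_le_iff₀ (pNorm_pos f.2)]
  refine (wNorm_le_pNorm hp _).trans (pNorm_le_of_abs_le hp (pNorm_nonneg p f.1) fun v => ?_)
  rw [abs_of_nonneg (maxOp_nonneg G f.1 v)]
  exact maxOp_le_of_abs_le G (pNorm_nonneg p f.1) (abs_le_pNorm hp f.1) v

lemma wNorm_maxOp_kdelta_le_wOpNorm (hp : 0 < p) (G : SimpleGraph V) (x : V) :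
    wNorm p (maxOp G (kdelta x)) ≤ wOpNorm G p := by
  have hδ : kdelta x ≠ 0 := Function.ne_iff.2 ⟨x, by simp [kdelta]⟩
  simpa [wOpNorm, pNorm_kdelta hp.ne'] using
    le_ciSup (bddAbove_wNorm_maxOp_div_pNorm hp G) ⟨kdelta x, hδ⟩

lemma wOpNorm_le {G : SimpleGraph V} {C : ℝ} (hC : 0 ≤ C)
    (h : ∀ f : V → ℝ, wNorm p (maxOp G f) ≤ C * pNorm p f) : wOpNorm G p ≤ C :=
  Real.iSup_le (fun f => (div_le_iff₀ (pNorm_pos f.2)).2 (h f.1)) hC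

end OperatorNorm

section LowerBounds

variable {p : ℝ} {G : SimpleGraph V}

lemma card_rpow_sub_one_le_wNorm_maxOp_kdelta (hp : 0 < p) (hG : G.Connected) (x : V) :
    (Fintype.card V : ℝ) ^ (1 / p - 1) ≤ wNorm p (maxOp G (kdelta x)) := by
  have : Nonempty V := ⟨x⟩
  have hN : (0 : ℝ) < Fintype.card V := by exact_mod_cast Fintype.card_pos
  have h := le_wNorm_of_le_card hp (maxOp G (kdelta x)) (inv_pos.2 hN) hN.le fun t _ ht => by
    rw [filter_true_of_mem fun v _ => ?_, card_univ]
    have hv := sum_abs_div_card_le_maxOp hG (kdelta x) v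
    rw [sum_abs_kdelta, one_div] at hv
    rw [abs_of_nonneg (maxOp_nonneg G _ v)]
    exact ht.trans_le hv
  rwa [Real.rpow_sub hN, Real.rpow_one, div_eq_inv_mul]

lemma one_le_wNorm_maxOp_kdelta (hp : 0 < p) (hG : G.Connected) (x : V) :
    1 ≤ wNorm p (maxOp G (kdelta x)) := by
  have h := le_wNorm_of_le_card hp (maxOp G (kdelta x)) one_pos zero_le_one fun t _ ht => by
    have hx : x ∈ univ.filter fun v => t < |maxOp G (kdelta x) v| := by
      simpa [abs_of_nonneg (maxOp_nonneg G _ x)] using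
        ht.trans_le (by simpa [kdelta] using abs_le_maxOp hG (kdelta x) x)
    exact_mod_cast card_pos.2 ⟨x, hx⟩
  simpa using h

end LowerBounds

section CompleteGraph

variable {p : ℝ} [Nonempty V]

lemma wNorm_maxOp_top_le (hp : 0 < p) (f : V → ℝ) :
    wNorm p (maxOp (⊤ : SimpleGraph V) f) ≤
      max ((∑ w, |f w|) * (Fintype.card V : ℝ) ^ (1 / p - 1)) (pNorm p f) := by
  have : Nonempty {t : ℝ // 0 < t} := ⟨⟨1, one_pos⟩⟩
  have hN : (0 : ℝ) < Fintype.card V := by exact_mod_cast Fintype.card_pos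
  refine ciSup_le fun ⟨t, ht⟩ => ?_
  rcases lt_or_ge t ((∑ w, |f w|) / Fintype.card V) with htA | hAt
  · refine le_max_of_le_left ?_
    calc t * ((univ.filter fun v => t < |maxOp ⊤ f v|).card : ℝ) ^ (1 / p)
        ≤ (∑ w, |f w|) / Fintype.card V * (Fintype.card V : ℝ) ^ (1 / p) :=
          mul_le_mul htA.le (Real.rpow_le_rpow (by positivity)
            (by exact_mod_cast card_le_univ _) (by positivity)) (by positivity) (by positivity)
      _ = (∑ w, |f w|) * (Fintype.card V : ℝ) ^ (1 / p - 1) := by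
          rw [Real.rpow_sub hN, Real.rpow_one]
          ring
  · refine le_max_of_le_right (mul_card_rpow_le_pNorm hp f ht.le _ fun v hv => ?_)
    have hv : t < maxOp ⊤ f v := by
      simpa [abs_of_nonneg (maxOp_nonneg _ f v)] using (mem_filter.1 hv).2
    by_contra! hfv
    exact ((maxOp_top_le f v).trans (max_le hfv.le hAt)).not_gt hv

lemma wOpNorm_top_le_of_le_one (hp : 0 < p) (hp1 : p ≤ 1) :
    wOpNorm (⊤ : SimpleGraph V) p ≤ (Fintype.card V : ℝ) ^ (1 / p - 1) := by
  have hC : 1 ≤ (Fintype.card V : ℝ) ^ (1 / p - 1) :=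
    Real.one_le_rpow (by exact_mod_cast Fintype.card_pos) (sub_nonneg.2 ((one_le_div hp).2 hp1))
  refine wOpNorm_le (by positivity) fun f => (wNorm_maxOp_top_le hp f).trans (max_le ?_ ?_)
  · rw [mul_comm]
    exact mul_le_mul_of_nonneg_left (sum_abs_le_pNorm hp hp1 f) (by positivity)
  · exact le_mul_of_one_le_left (pNorm_nonneg p f) hC

lemma wOpNorm_top_le_of_one_le (hp1 : 1 ≤ p) : wOpNorm (⊤ : SimpleGraph V) p ≤ 1 := by
  have hp : 0 < p := one_pos.trans_le hp1
  have hN : (0 : ℝ) < Fintype.card V := by exact_mod_cast Fintype.card_pos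
  refine wOpNorm_le zero_le_one fun f =>
    (wNorm_maxOp_top_le hp f).trans (max_le ?_ (one_mul _).ge)
  calc (∑ w, |f w|) * (Fintype.card V : ℝ) ^ (1 / p - 1)
      ≤ (Fintype.card V : ℝ) ^ (1 - 1 / p) * pNorm p f * (Fintype.card V : ℝ) ^ (1 / p - 1) :=
        mul_le_mul_of_nonneg_right (sum_abs_le_card_rpow_mul_pNorm hp1 f) (by positivity)
    _ = 1 * pNorm p f := by
        rw [mul_right_comm, ← Real.rpow_add hN]
        simp

end CompleteGraph

/-- weak-type norms for the complete graph, and the resulting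
lower bounds for arbitrary connected graphs. -/
theorem stmt14 (n : ℕ) (hn : 2 ≤ n) (p : ℝ) (hp : 0 < p) :
    (p ≤ 1 → wOpNorm (⊤ : SimpleGraph (Fin n)) p = (n : ℝ) ^ (1 / p - 1)) ∧
    (1 ≤ p → wOpNorm (⊤ : SimpleGraph (Fin n)) p = 1) ∧
    (∀ G : SimpleGraph (Fin n), G.Connected →
      (p ≤ 1 → (n : ℝ) ^ (1 / p - 1) ≤ wOpNorm G p) ∧
      (1 ≤ p → 1 ≤ wOpNorm G p)) := by
  have x : Fin n := ⟨0, by omega⟩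
  have lower : ∀ G : SimpleGraph (Fin n), G.Connected →
      (n : ℝ) ^ (1 / p - 1) ≤ wOpNorm G p ∧ 1 ≤ wOpNorm G p := fun G hG => by
    have hδ := wNorm_maxOp_kdelta_le_wOpNorm hp G x
    have hpow := card_rpow_sub_one_le_wNorm_maxOp_kdelta hp hG x
    rw [Fintype.card_fin] at hpow
    exact ⟨hpow.trans hδ, (one_le_wNorm_maxOp_kdelta hp hG x).trans hδ⟩
  have : Nonempty (Fin n) := ⟨x⟩
  have hcard := wOpNorm_top_le_of_le_one (V := Fin n) hp
  rw [Fintype.card_fin] at hcard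
  refine ⟨fun hp1 => ?_, fun hp1 => ?_, fun G hG => ⟨fun _ => (lower G hG).1, fun _ => (lower G hG).2⟩⟩
  · exact le_antisymm (hcard hp1) (lower ⊤ SimpleGraph.connected_top).1
  · exact le_antisymm (wOpNorm_top_le_of_one_le hp1) (lower ⊤ SimpleGraph.connected_top).2
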